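/- If f = Σ_{α ∈ Δ} (c_α/α!) w^α is a Lorentzian polynomial of degree d in n variables, then for any indices i, j and any α with |α|₁ = d, c_α² ≥ c_{α+eᵢ−eⱼ} · c_{α−eᵢ+eⱼ} (where coefficients with indices outside ℕⁿ are zero). -/

import Mathlib

open MvPolynomial Matrix

noncomputable def polyHessian {n : ℕ} (f : MvPolynomial (Fin n) ℝ) (w : Fin n → ℝ) :
    Matrix (Fin n) (Fin n) ℝ :=
  Matrix.of fun i j => eval w (pderiv i (pderiv j f))

def ExactlyOnePosEig {n : ℕ} (A : Matrix (Fin n) (Fin n) ℝ) : Prop :=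
  ∃ hA : A.IsHermitian, (Finset.univ.filter fun i => 0 < hA.eigenvalues i).card = 1

def AtMostOnePosEig {n : ℕ} (A : Matrix (Fin n) (Fin n) ℝ) : Prop :=
  ∃ hA : A.IsHermitian, (Finset.univ.filter fun i => 0 < hA.eigenvalues i).card ≤ 1

def MConvexSet {n : ℕ} (J : Set (Fin n →₀ ℕ)) : Prop :=
  ∀ α ∈ J, ∀ β ∈ J, ∀ i : Fin n, β i < α i →
    ∃ j : Fin n, α j < β j ∧ α - Finsupp.single i 1 + Finsupp.single j 1 ∈ J

def LorBase {n : ℕ} (d : ℕ) (f : MvPolynomial (Fin n) ℝ) : Prop :=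
  f.IsHomogeneous d ∧ (∀ α, 0 ≤ f.coeff α) ∧ MConvexSet {α | f.coeff α ≠ 0}

def IsLorentzian {n : ℕ} : ℕ → MvPolynomial (Fin n) ℝ → Prop
  | 0, f => LorBase 0 f
  | 1, f => LorBase 1 f
  | 2, f => LorBase 2 f ∧ AtMostOnePosEig (polyHessian f 0)
  | d + 3, f => LorBase (d + 3) f ∧ ∀ i, IsLorentzian (d + 2) (pderiv i f)

noncomputable def normCoeffZ {n : ℕ} (f : MvPolynomial (Fin n) ℝ) (v : Fin n → ℤ) : ℝ :=
  if ∀ i, 0 ≤ v i then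
    ((∏ i, Nat.factorial (v i).toNat : ℕ) : ℝ) *
      f.coeff (Finsupp.equivFunOnFinite.symm fun i => (v i).toNat)
  else 0

lemma coeff_pderiv' {n : ℕ} (f : MvPolynomial (Fin n) ℝ) (i : Fin n) (β : Fin n →₀ ℕ) :
    coeff β (pderiv i f) = ((β i + 1 : ℕ) : ℝ) * coeff (β + Finsupp.single i 1) f := by
  induction f using MvPolynomial.induction_on' with
  | add p q hp hq => simp [hp, hq, mul_add]
  | monomial s a =>
    rw [pderiv_monomial, coeff_monomial, coeff_monomial]
    by_cases h : s = β + Finsupp.single i 1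
    · subst h
      rw [if_pos, if_pos rfl]
      · push_cast
        simp [Finsupp.add_apply, Finsupp.single_apply, mul_comm]
      · ext l
        simp [Finsupp.tsub_apply, Finsupp.add_apply, Finsupp.single_apply]
    · rw [if_neg h, mul_zero]
      by_cases h2 : s - Finsupp.single i 1 = β
      · rw [if_pos h2]
        have hsi : s i = 0 := by
          by_contra hne
          apply h
          rw [← h2]
          ext l
          simp only [Finsupp.add_apply, Finsupp.tsub_apply, Finsupp.single_apply]
          split_ifs with hl
          · subst hl; omega
          · omega
        simp [hsi]
      · rw [if_neg h2]

lemma normCoeffZ_coe {n : ℕ} (f : MvPolynomial (Fin n) ℝ) (β : Fin n →₀ ℕ) :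
    normCoeffZ f (fun l => (β l : ℤ)) =
      ((∏ l, Nat.factorial (β l) : ℕ) : ℝ) * f.coeff β := by
  rw [normCoeffZ, if_pos (fun l => Int.ofNat_nonneg _)]
  simp [Finsupp.equivFunOnFinite_symm_coe]

lemma normCoeffZ_neg_entry {n : ℕ} (f : MvPolynomial (Fin n) ℝ) {v : Fin n → ℤ} {l : Fin n}
    (hl : v l < 0) : normCoeffZ f v = 0 := by
  rw [normCoeffZ, if_neg]
  intro h
  exact absurd (h l) (by omega)

lemma normCoeffZ_pderiv {n : ℕ} (f : MvPolynomial (Fin n) ℝ) (k : Fin n) (v : Fin n → ℤ)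
    (hv : v k ≠ -1) :
    normCoeffZ (pderiv k f) v = normCoeffZ f (fun l => v l + if l = k then 1 else 0) := by
  by_cases h : ∀ l, 0 ≤ v l
  · have h' : ∀ l, 0 ≤ v l + if l = k then 1 else 0 := by
      intro l; have := h l; split <;> omega
    rw [normCoeffZ, normCoeffZ, if_pos h, if_pos h']
    have hβ : (Finsupp.equivFunOnFinite.symm fun l => ((v l + if l = k then 1 else 0).toNat)) =
        (Finsupp.equivFunOnFinite.symm fun l => (v l).toNat) + Finsupp.single k 1 := by
      ext l
      simp only [Finsupp.coe_equivFunOnFinite_symm, Finsupp.add_apply,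
        Finsupp.single_apply]
      have := h l
      rcases eq_or_ne l k with rfl | hl
      · simp; omega
      · simp [hl, Ne.symm hl]
    have hprod : (∏ l, Nat.factorial ((v l + if l = k then 1 else 0).toNat)) =
        ((v k).toNat + 1) * ∏ l, Nat.factorial ((v l).toNat) := by
      rw [← Finset.prod_erase_mul _ _ (Finset.mem_univ k),
          ← Finset.prod_erase_mul _ _ (Finset.mem_univ k)]
      have he : ∀ l ∈ Finset.univ.erase k,
          Nat.factorial ((v l + if l = k then 1 else 0).toNat) =
            Nat.factorial ((v l).toNat) := by
        intro l hl
        rw [Finset.mem_erase] at hl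
        simp [hl.1]
      rw [Finset.prod_congr rfl he]
      have : (v k + if k = k then 1 else 0).toNat = (v k).toNat + 1 := by
        have := h k; simp; omega
      rw [this, Nat.factorial_succ]
      ring
    rw [coeff_pderiv', hβ, hprod]
    simp only [Finsupp.coe_equivFunOnFinite_symm]
    push_cast
    ring
  · push_neg at h
    obtain ⟨m, hm⟩ := h
    rcases eq_or_ne m k with rfl | hmk
    · rw [normCoeffZ_neg_entry _ hm, normCoeffZ_neg_entry f (l := m) (by simp; omega)]
    · rw [normCoeffZ_neg_entry _ hm, normCoeffZ_neg_entry f (l := m) (by simp [hmk]; omega)]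

lemma amope_ineq {m : ℕ} {A : Matrix (Fin m) (Fin m) ℝ} (h1 : AtMostOnePosEig A)
    {i j : Fin m} (hij : i ≠ j) (hii : 0 ≤ A i i) (hjj : 0 ≤ A j j) :
    A i i * A j j ≤ A i j * A j i := by
  obtain ⟨hA, hcard⟩ := h1
  have hsym : A j i = A i j := by
    have := congrFun (congrFun hA i) j
    simpa [Matrix.conjTranspose_apply] using this
  by_contra hlt
  push_neg at hlt
  rw [hsym] at hlt
  have hii' : 0 < A i i := by nlinarith [sq_nonneg (A i j)]
  have hjj' : 0 < A j j := by nlinarith [sq_nonneg (A i j)]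
  set U : Matrix (Fin m) (Fin m) ℝ := (hA.eigenvectorUnitary : Matrix (Fin m) (Fin m) ℝ) with hU
  have hform : ∀ x : Fin m → ℝ,
      x ⬝ᵥ (A *ᵥ x) = ∑ k, hA.eigenvalues k * ((star U *ᵥ x) k) ^ 2 := by
    intro x
    conv_lhs => rw [hA.spectral_theorem, Unitary.conjStarAlgAut_apply]
    rw [← Matrix.mulVec_mulVec, ← Matrix.mulVec_mulVec, Matrix.dotProduct_mulVec]
    have hvm : x ᵥ* U = star U *ᵥ x := by
      funext l
      simp only [Matrix.vecMul, Matrix.mulVec, dotProduct, Matrix.conjTranspose_apply,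
        Matrix.star_apply, star_trivial]
      exact Finset.sum_congr rfl fun _ _ => mul_comm _ _
    rw [hvm]
    simp only [Matrix.mulVec_diagonal, dotProduct, Function.comp_apply,
      RCLike.ofReal_real_eq_id, id_eq]
    exact Finset.sum_congr rfl fun k _ => by ring
  obtain ⟨K, hKle⟩ : ∃ K, ∀ k, k ≠ K → hA.eigenvalues k ≤ 0 := by
    rcases Nat.le_one_iff_eq_zero_or_eq_one.mp hcard with h0 | h1
    · refine ⟨i, fun k _ => ?_⟩
      by_contra hpos
      push_neg at hpos
      have : k ∈ Finset.univ.filter fun l => 0 < hA.eigenvalues l := by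
        simp [hpos]
      rw [Finset.card_eq_zero.mp h0] at this
      exact absurd this (Finset.notMem_empty k)
    · obtain ⟨K, hK⟩ := Finset.card_eq_one.mp h1
      refine ⟨K, fun k hk => ?_⟩
      by_contra hpos
      push_neg at hpos
      have : k ∈ Finset.univ.filter fun l => 0 < hA.eigenvalues l := by simp [hpos]
      rw [hK] at this
      exact hk (Finset.mem_singleton.mp this)
  obtain ⟨s, t, hst0, hker⟩ : ∃ s t : ℝ, ¬(s = 0 ∧ t = 0) ∧ U i K * s + U j K * t = 0 := by
    by_cases h : U i K = 0 ∧ U j K = 0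
    · exact ⟨1, 0, by norm_num, by simp [h.1, h.2]⟩
    · exact ⟨U j K, -U i K, by rw [not_and_or] at h; rcases h with h | h <;> simp [h],
        by ring⟩
  set x : Fin m → ℝ := Pi.single i s + Pi.single j t with hx
  have hQ : x ⬝ᵥ (A *ᵥ x) = s * (A i i * s + A i j * t) + t * (A j i * s + A j j * t) := by
    simp only [hx, Matrix.mulVec_add, Matrix.mulVec_single, add_dotProduct,
      dotProduct_add, single_dotProduct, Pi.add_apply, Pi.smul_apply,
      op_smul_eq_mul, Matrix.col_apply]
    ring
  have hQpos : 0 < x ⬝ᵥ (A *ᵥ x) := by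
    rw [hQ, hsym]
    rcases eq_or_ne t 0 with rfl | ht
    · have hs : s ≠ 0 := by tauto
      have : 0 < s ^ 2 := by positivity
      nlinarith
    · have ht2 : 0 < t ^ 2 := by positivity
      nlinarith [sq_nonneg (A i i * s + A i j * t), mul_pos (sub_pos.mpr hlt) ht2,
        mul_pos hii' (mul_pos (sub_pos.mpr hlt) ht2)]
  have hyK : (star U *ᵥ x) K = 0 := by
    simp only [hx, Matrix.mulVec_add, Matrix.mulVec_single, Pi.add_apply,
      Matrix.conjTranspose_apply, Matrix.star_apply, star_trivial]
    simpa using hker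
  have hQneg : x ⬝ᵥ (A *ᵥ x) ≤ 0 := by
    rw [hform x]
    apply Finset.sum_nonpos
    intro k _
    rcases eq_or_ne k K with rfl | hk
    · rw [hyK]; simp
    · exact mul_nonpos_of_nonpos_of_nonneg (hKle k hk) (sq_nonneg _)
  linarith

lemma finsupp_sum_eq {n : ℕ} (β : Fin n →₀ ℕ) : (β.sum fun _ k => k) = ∑ l, β l :=
  Finsupp.sum_fintype _ _ (fun _ => rfl)

theorem stmt6 {n d : ℕ} (f : MvPolynomial (Fin n) ℝ) (hf : IsLorentzian d f) :
    ∀ (i j : Fin n) (α : Fin n →₀ ℕ), (α.sum fun _ k => k) = d →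
      normCoeffZ f (fun k => (α k : ℤ) + (if k = i then 1 else 0) - (if k = j then 1 else 0)) *
          normCoeffZ f (fun k => (α k : ℤ) - (if k = i then 1 else 0) + (if k = j then 1 else 0)) ≤
        (normCoeffZ f fun k => (α k : ℤ)) ^ 2 := by
  induction d using Nat.strong_induction_on generalizing f with
  | _ d ih =>
  intro i j α hα
  rcases eq_or_ne i j with rfl | hij
  · have hv1 : (fun k => (α k : ℤ) + (if k = i then 1 else 0) - (if k = i then 1 else 0)) =
        fun k => (α k : ℤ) := by funext k; ring
    have hv2 : (fun k => (α k : ℤ) - (if k = i then 1 else 0) + (if k = i then 1 else 0)) =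
        fun k => (α k : ℤ) := by funext k; ring
    rw [hv1, hv2]
    exact le_of_eq (sq _).symm
  by_cases hzj : α j = 0
  · rw [normCoeffZ_neg_entry f (l := j) (by simp [hzj, Ne.symm hij]), zero_mul]
    exact sq_nonneg _
  by_cases hzi : α i = 0
  · rw [normCoeffZ_neg_entry f (v := fun k => (α k : ℤ) - (if k = i then 1 else 0) +
      (if k = j then 1 else 0)) (l := i) (by simp [hzi, hij]), mul_zero]
    exact sq_nonneg _
  have hαsum : ∑ l, α l = d := by rw [← finsupp_sum_eq]; exact hα
  have hpair : α i + α j ≤ ∑ l, α l := by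
    rw [← Finset.sum_pair hij]
    exact Finset.sum_le_sum_of_subset (Finset.subset_univ _)
  rcases d with _ | _ | _ | m
  · omega
  · omega
  · -- degree 2 case
    simp only [IsLorentzian] at hf
    obtain ⟨⟨hhom, hnn, hM⟩, heig⟩ := hf
    have hsplit0 := Finset.sum_sdiff (Finset.subset_univ ({i, j} : Finset (Fin n)))
      (f := fun l => α l)
    rw [Finset.sum_pair hij] at hsplit0
    have hsplit : ∑ x ∈ Finset.univ \ ({i, j} : Finset (Fin n)), α x + (α i + α j) =
        ∑ x, α x := hsplit0
    have hr0 : ∑ l ∈ Finset.univ \ ({i, j} : Finset (Fin n)), α l = 0 := by omega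
    have h1 : α i = 1 := by omega
    have h2 : α j = 1 := by omega
    have h0 : ∀ l, l ≠ i → l ≠ j → α l = 0 := by
      intro l hli hlj
      exact (Finset.sum_eq_zero_iff.mp hr0) l (by simp [hli, hlj])
    have hα2 : α = Finsupp.single i 1 + Finsupp.single j 1 := by
      ext l
      simp only [Finsupp.add_apply, Finsupp.single_apply]
      rcases eq_or_ne l i with rfl | hli
      · simp [h1, hij, Ne.symm hij]
      · rcases eq_or_ne l j with rfl | hlj
        · simp [h2, Ne.symm hli]
        · simp [h0 l hli hlj, Ne.symm hli, Ne.symm hlj]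
    have e1 : (fun k => (α k : ℤ) + (if k = i then 1 else 0) - (if k = j then 1 else 0)) =
        fun l => ((Finsupp.single i 2 : Fin n →₀ ℕ) l : ℤ) := by
      funext l
      simp only [Finsupp.single_apply]
      rcases eq_or_ne l i with rfl | hli
      · simp [h1, hij]
      · rcases eq_or_ne l j with rfl | hlj
        · simp [h2, hli, Ne.symm hli]
        · simp [h0 l hli hlj, hli, hlj, Ne.symm hli]
    have e2 : (fun k => (α k : ℤ) - (if k = i then 1 else 0) + (if k = j then 1 else 0)) =
        fun l => ((Finsupp.single j 2 : Fin n →₀ ℕ) l : ℤ) := by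
      funext l
      simp only [Finsupp.single_apply]
      rcases eq_or_ne l j with rfl | hlj
      · simp [h2, Ne.symm hij]
      · rcases eq_or_ne l i with rfl | hli
        · simp [h1, hlj, Ne.symm hlj]
        · simp [h0 l hli hlj, hli, hlj, Ne.symm hlj]
    rw [e1, e2, normCoeffZ_coe, normCoeffZ_coe, normCoeffZ_coe]
    have p1 : (∏ l, Nat.factorial ((Finsupp.single i 2 : Fin n →₀ ℕ) l)) = 2 := by
      rw [Finset.prod_eq_single i (fun b _ hb => by simp [Finsupp.single_apply, Ne.symm hb])
        (by simp)]
      simp [Nat.factorial]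
    have p2 : (∏ l, Nat.factorial ((Finsupp.single j 2 : Fin n →₀ ℕ) l)) = 2 := by
      rw [Finset.prod_eq_single j (fun b _ hb => by simp [Finsupp.single_apply, Ne.symm hb])
        (by simp)]
      simp [Nat.factorial]
    have p0 : (∏ l, Nat.factorial (α l)) = 1 := by
      apply Finset.prod_eq_one
      intro l _
      rcases eq_or_ne l i with rfl | hli
      · simp [h1]
      · rcases eq_or_ne l j with rfl | hlj
        · simp [h2]
        · simp [h0 l hli hlj]
    set H := polyHessian f 0 with hHdef
    have hH : ∀ a b : Fin n, H a b =
        (((Finsupp.single a 1 : Fin n →₀ ℕ) b + 1 : ℕ) : ℝ) *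
          coeff (Finsupp.single a 1 + Finsupp.single b 1) f := by
      intro a b
      show eval 0 (pderiv a (pderiv b f)) = _
      rw [MvPolynomial.eval_zero, MvPolynomial.constantCoeff_eq, coeff_pderiv', coeff_pderiv']
      simp [Finsupp.single_apply]
    have hHij : H i j = coeff α f := by
      rw [hH i j, hα2]
      simp [Finsupp.single_apply, hij]
    have hHji : H j i = coeff α f := by
      rw [hH j i, hα2, add_comm (Finsupp.single j 1)]
      simp [Finsupp.single_apply, Ne.symm hij]
    have hHii : H i i = 2 * coeff (Finsupp.single i 2) f := by
      rw [hH i i, ← Finsupp.single_add]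
      norm_num [Finsupp.single_apply]
    have hHjj : H j j = 2 * coeff (Finsupp.single j 2) f := by
      rw [hH j j, ← Finsupp.single_add]
      norm_num [Finsupp.single_apply]
    have key := amope_ineq heig hij (by rw [hHii]; linarith [hnn (Finsupp.single i 2)])
      (by rw [hHjj]; linarith [hnn (Finsupp.single j 2)])
    rw [hHii, hHjj, hHij, hHji] at key
    rw [p0, p1, p2]
    push_cast
    nlinarith [key]
  · -- degree m + 3 : inductive step
    simp only [IsLorentzian] at hf
    obtain ⟨hbase, hder⟩ := hf
    obtain ⟨k, hk1, hki, hkj⟩ : ∃ k, 1 ≤ α k ∧ (k = i → 2 ≤ α i) ∧ (k = j → 2 ≤ α j) := by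
      by_cases hi2 : 2 ≤ α i
      · exact ⟨i, by omega, fun _ => hi2, fun h => absurd h hij⟩
      · by_cases hj2 : 2 ≤ α j
        · exact ⟨j, by omega, fun h => absurd h.symm hij, fun _ => hj2⟩
        · have hex : ∃ k, k ≠ i ∧ k ≠ j ∧ 1 ≤ α k := by
            by_contra hcon
            push_neg at hcon
            have hs : ∑ l, α l = α i + α j := by
              rw [← Finset.sum_pair hij]
              refine (Finset.sum_subset (Finset.subset_univ _) ?_).symm
              intro l _ hl
              simp only [Finset.mem_insert, Finset.mem_singleton] at hl
              push_neg at hl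
              have := hcon l hl.1 hl.2
              omega
            omega
          obtain ⟨k, hki', hkj', hk1⟩ := hex
          exact ⟨k, hk1, fun h => absurd h hki', fun h => absurd h hkj'⟩
    set α' := α - Finsupp.single k 1 with hα'def
    have hα'app : ∀ l, α' l = α l - (if k = l then 1 else 0) := by
      intro l
      rw [hα'def, Finsupp.tsub_apply, Finsupp.single_apply]
    have hsum' : (α'.sum fun _ k => k) = m + 2 := by
      rw [finsupp_sum_eq]
      have hee : ∀ l ∈ Finset.univ.erase k, α' l = α l := by
        intro l hl
        rw [hα'app l, if_neg (fun h : k = l => (Finset.mem_erase.mp hl).1 h.symm)]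
        omega
      have e1 : ∑ x ∈ Finset.univ.erase k, α' x + α' k = ∑ x, α' x :=
        Finset.sum_erase_add _ _ (Finset.mem_univ k)
      have e2 : ∑ x ∈ Finset.univ.erase k, α x + α k = ∑ x, α x :=
        Finset.sum_erase_add _ _ (Finset.mem_univ k)
      have heq : ∑ x ∈ Finset.univ.erase k, α' x = ∑ x ∈ Finset.univ.erase k, α x :=
        Finset.sum_congr rfl hee
      have hαs2 : ∑ x, α x = m + 1 + 1 + 1 := hαsum
      have ha := hα'app k
      rw [if_pos rfl] at ha
      have goal2 : ∑ x, α' x = m + 2 := by omega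
      exact goal2
    have IH := ih (m + 2) (by omega) (pderiv k f) (hder k) i j α' hsum'
    have hs1 : (α' k : ℤ) + (if k = i then 1 else 0) - (if k = j then 1 else 0) ≠ -1 := by
      have h := hα'app k
      rw [if_pos rfl] at h
      by_cases h1 : k = i
      · subst h1
        rw [if_pos rfl, if_neg hij]
        omega
      · by_cases h2 : k = j
        · subst h2
          have := hkj rfl
          rw [if_neg h1, if_pos rfl]
          omega
        · rw [if_neg h1, if_neg h2]
          omega
    have hs2 : (α' k : ℤ) - (if k = i then 1 else 0) + (if k = j then 1 else 0) ≠ -1 := by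
      have h := hα'app k
      rw [if_pos rfl] at h
      by_cases h1 : k = i
      · subst h1
        have := hki rfl
        rw [if_pos rfl, if_neg hij]
        omega
      · by_cases h2 : k = j
        · subst h2
          rw [if_neg h1, if_pos rfl]
          omega
        · rw [if_neg h1, if_neg h2]
          omega
    have hs0 : (α' k : ℤ) ≠ -1 := by omega
    have q1 : normCoeffZ (pderiv k f)
        (fun l => (α' l : ℤ) + (if l = i then 1 else 0) - (if l = j then 1 else 0)) =
        normCoeffZ f (fun l => (α l : ℤ) + (if l = i then 1 else 0) - (if l = j then 1 else 0)) := by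
      rw [normCoeffZ_pderiv f k
        (fun l => (α' l : ℤ) + (if l = i then 1 else 0) - (if l = j then 1 else 0)) hs1]
      congr 1
      funext l
      have h := hα'app l
      by_cases hkl : k = l
      · rw [if_pos hkl] at h
        subst hkl
        split_ifs <;> omega
      · rw [if_neg hkl] at h
        rw [if_neg (fun hh : l = k => hkl hh.symm)]
        split_ifs <;> omega
    have q2 : normCoeffZ (pderiv k f)
        (fun l => (α' l : ℤ) - (if l = i then 1 else 0) + (if l = j then 1 else 0)) =
        normCoeffZ f (fun l => (α l : ℤ) - (if l = i then 1 else 0) + (if l = j then 1 else 0)) := by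
      rw [normCoeffZ_pderiv f k
        (fun l => (α' l : ℤ) - (if l = i then 1 else 0) + (if l = j then 1 else 0)) hs2]
      congr 1
      funext l
      have h := hα'app l
      by_cases hkl : k = l
      · rw [if_pos hkl] at h
        subst hkl
        split_ifs <;> omega
      · rw [if_neg hkl] at h
        rw [if_neg (fun hh : l = k => hkl hh.symm)]
        split_ifs <;> omega
    have q0 : normCoeffZ (pderiv k f) (fun l => (α' l : ℤ)) =
        normCoeffZ f (fun l => (α l : ℤ)) := by
      rw [normCoeffZ_pderiv f k (fun l => (α' l : ℤ)) hs0]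
      congr 1
      funext l
      have h := hα'app l
      by_cases hkl : k = l
      · rw [if_pos hkl] at h
        subst hkl
        split_ifs <;> omega
      · rw [if_neg hkl] at h
        rw [if_neg (fun hh : l = k => hkl hh.symm)]
        omega
    rw [q1, q2, q0] at IH
    exact IH
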